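/- arXiv:2206.03779 — 4 statements merged into one kernel-verified Lean document; each statement's English description precedes it below -/
import Mathlib

section
/- Let n ≥ 1, let Φ' ⊆ A_{n−1} = {e_i − e_j : i ≠ j} be a root subsystem, let ∼ be the equivalence relation on {1,…,n} given by i ∼ j iff i = j or e_i − e_j ∈ Φ', and let b : {1,…,n} → {1,…,m} be a surjection with b(i) = b(j) if and only if i ∼ j. Define the linear maps ψ : ℝ^m → ℝ^n by ψ(x)_i = x_{b(i)} and T : ℝ^n → ℝ^m by (Tv)_k = Σ_{i : b(i)=k} v_i. Then: (i) the image of ψ equals Ker(Φ') := {v ∈ ℝ^n : ⟨α,v⟩ = 0 for all α ∈ Φ'}; (ii) T(e_i − e_j) = e_{b(i)} − e_{b(j)} for all i, j, and the image T(A_{n−1} ∖ Φ') equals A_{m−1} = {e_k − e_l : k ≠ l in {1,…,m}}; (iii) for any root subsystem Φ with Φ' ⊆ Φ ⊆ A_{n−1}, the set T(Φ ∖ Φ') is a root subsystem of A_{m−1}. -/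
open Finset

noncomputable section

/-- Standard basis vector `e i` of `ℝ^n`. -/
def E {n : ℕ} (i : Fin n) : Fin n → ℝ := Pi.single i 1

/-- Standard inner product on `ℝ^n`. -/
def dot {n : ℕ} (v w : Fin n → ℝ) : ℝ := ∑ i, v i * w i

/-- Reflection across the hyperplane orthogonal to `α`. -/
def reflRoot {n : ℕ} (α v : Fin n → ℝ) : Fin n → ℝ := v - (2 * dot v α / dot α α) • α

/-- The root system `A_{n-1}`. -/
def Aset (n : ℕ) : Set (Fin n → ℝ) := {α | ∃ i j : Fin n, i ≠ j ∧ α = E i - E j}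

/-- The root system `D_n`. -/
def Dset (n : ℕ) : Set (Fin n → ℝ) :=
  {α | ∃ i j : Fin n, i ≠ j ∧ (α = E i - E j ∨ α = E i + E j ∨ α = -(E i + E j))}

/-- The root system `B_n`. -/
def Bset (n : ℕ) : Set (Fin n → ℝ) := Dset n ∪ {α | ∃ i : Fin n, α = E i ∨ α = -E i}

/-- The root system `C_n`. -/
def Cset (n : ℕ) : Set (Fin n → ℝ) :=
  Dset n ∪ {α | ∃ i : Fin n, α = (2:ℝ) • E i ∨ α = -((2:ℝ) • E i)}

/-- The nonreduced root system `BC_n`. -/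
def BCset (n : ℕ) : Set (Fin n → ℝ) := Bset n ∪ Cset n

/-- The transpose of the parametrization of `Ker Φ'` by the blocks:
`(Tmap b v) k = ∑_{i : b i = k} v i`. -/
def Tmap {n m : ℕ} (b : Fin n → Fin m) (v : Fin n → ℝ) : Fin m → ℝ :=
  fun k => ∑ i ∈ Finset.univ.filter (fun i => b i = k), v i


/- The reflection in `e_p - e_q` permutes the coordinates by the transposition `(p q)`, and
`T (e_i - e_j) = e_{b i} - e_{b j}`. Given roots `e_i - e_j` and `e_k - e_l` of `Φ \ Φ'`, reflecting
in roots of `Φ' ⊆ Φ` moves `k` and `l` inside their blocks to `k'` and `l'` with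
`b (swap i j k') = swap (b i) (b j) (b k)` and likewise for `l'`. The reflection of
`e_{k'} - e_{l'}` in `e_i - e_j` is then a root of `Φ \ Φ'` lying over the reflection of
`T (e_k - e_l)` in `T (e_i - e_j)`. -/

section Roots

variable {n : ℕ}

lemma dot_comm (v w : Fin n → ℝ) : dot v w = dot w v := by
  simp only [dot, mul_comm]

lemma dot_E_sub_left (i j : Fin n) (v : Fin n → ℝ) : dot (E i - E j) v = v i - v j := by
  simp [dot, E, sub_mul, Finset.sum_sub_distrib, Pi.single_apply, ite_mul]

lemma E_comp_swap (p q r : Fin n) : E r ∘ Equiv.swap p q = E (Equiv.swap p q r) := by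
  funext i
  simp [E, Pi.single_apply, Equiv.swap_apply_eq_iff]

lemma reflRoot_E_sub {p q : Fin n} (hpq : p ≠ q) (v : Fin n → ℝ) :
    reflRoot (E p - E q) v = v ∘ Equiv.swap p q := by
  have hαα : dot (E p - E q) (E p - E q) = 2 := by
    rw [dot_E_sub_left]
    simp [E, hpq, hpq.symm]
    norm_num
  funext i
  rw [reflRoot, hαα, dot_comm, dot_E_sub_left]
  by_cases hip : i = p
  · subst hip; simp [E, hpq]
  · by_cases hiq : i = q
    · subst hiq; simp [E, hpq.symm]
    · simp [E, hip, hiq, Equiv.swap_apply_of_ne_of_ne]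

lemma reflRoot_E_sub_E_sub {p q : Fin n} (hpq : p ≠ q) (r s : Fin n) :
    reflRoot (E p - E q) (E r - E s) = E (Equiv.swap p q r) - E (Equiv.swap p q s) := by
  rw [reflRoot_E_sub hpq, ← E_comp_swap, ← E_comp_swap]
  rfl

end Roots

lemma Tmap_E_sub {n m : ℕ} (b : Fin n → Fin m) (i j : Fin n) :
    Tmap b (E i - E j) = E (b i) - E (b j) := by
  funext k
  simp [Tmap, E, Pi.single_apply, Finset.sum_sub_distrib, eq_comm]

lemma exists_comp_swap_eq_swap_comp {n m : ℕ} (b : Fin n → Fin m) (i j k : Fin n) :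
    ∃ k', b k' = b k ∧ b (Equiv.swap i j k') = Equiv.swap (b i) (b j) (b k) := by
  by_cases hki : b k = b i
  · exact ⟨i, hki.symm, by rw [hki, Equiv.swap_apply_left, Equiv.swap_apply_left]⟩
  by_cases hkj : b k = b j
  · exact ⟨j, hkj.symm, by rw [hkj, Equiv.swap_apply_right, Equiv.swap_apply_right]⟩
  refine ⟨k, rfl, ?_⟩
  rw [Equiv.swap_apply_of_ne_of_ne hki hkj, Equiv.swap_apply_of_ne_of_ne
    (fun h => hki (congrArg b h)) fun h => hkj (congrArg b h)]

section Blocks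

variable {n m : ℕ} {b : Fin n → Fin m} {Φ' Φ : Set (Fin n → ℝ)}

lemma range_comp_eq_ker (hsub : Φ' ⊆ Aset n) (hb : Function.Surjective b)
    (hbiff : ∀ i j : Fin n, b i = b j ↔ (i = j ∨ E i - E j ∈ Φ')) :
    Set.range (fun x : Fin m → ℝ => fun i => x (b i)) =
      {v : Fin n → ℝ | ∀ α ∈ Φ', dot α v = 0} := by
  ext v
  constructor
  · rintro ⟨x, rfl⟩ α hα
    obtain ⟨i, j, -, rfl⟩ := hsub hα
    simp only [dot_E_sub_left, (hbiff i j).mpr (Or.inr hα), sub_self]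
  · intro hv
    choose s hs using hb
    refine ⟨v ∘ s, funext fun i => ?_⟩
    rcases (hbiff _ _).mp (hs (b i)) with h | h
    · simp only [Function.comp_apply, h]
    · exact sub_eq_zero.mp (dot_E_sub_left _ _ v ▸ hv _ h)

lemma exists_E_sub_of_mem_diff (hΦ : Φ ⊆ Aset n)
    (hsame : ∀ i j : Fin n, b i = b j → i = j ∨ E i - E j ∈ Φ')
    {α : Fin n → ℝ} (hα : α ∈ Φ \ Φ') : ∃ i j, b i ≠ b j ∧ α = E i - E j := by
  obtain ⟨i, j, hij, rfl⟩ := hΦ hα.1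
  refine ⟨i, j, fun h => ?_, rfl⟩
  exact (hsame i j h).elim hij hα.2

lemma Tmap_image_diff_subset (hΦ : Φ ⊆ Aset n)
    (hsame : ∀ i j : Fin n, b i = b j → i = j ∨ E i - E j ∈ Φ') :
    Tmap b '' (Φ \ Φ') ⊆ Aset m := by
  rintro _ ⟨α, hα, rfl⟩
  obtain ⟨i, j, hbij, rfl⟩ := exists_E_sub_of_mem_diff hΦ hsame hα
  exact ⟨b i, b j, hbij, Tmap_E_sub b i j⟩

lemma Tmap_image_Aset_diff (hb : Function.Surjective b)
    (hbiff : ∀ i j : Fin n, b i = b j ↔ (i = j ∨ E i - E j ∈ Φ')) :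
    Tmap b '' (Aset n \ Φ') = Aset m := by
  refine (Tmap_image_diff_subset subset_rfl fun i j => (hbiff i j).mp).antisymm ?_
  rintro _ ⟨k, l, hkl, rfl⟩
  obtain ⟨i, rfl⟩ := hb k
  obtain ⟨j, rfl⟩ := hb l
  refine ⟨E i - E j, ⟨⟨i, j, fun h => hkl (congrArg b h), rfl⟩, fun h => ?_⟩, Tmap_E_sub b i j⟩
  exact hkl ((hbiff i j).mpr (Or.inr h))

lemma E_sub_mem_of_same_blocks (hcl : ∀ α ∈ Φ, ∀ β ∈ Φ, reflRoot α β ∈ Φ)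
    (hblock : ∀ a a' : Fin n, b a = b a' → a ≠ a' → E a - E a' ∈ Φ)
    {a c a' c' : Fin n} (ha : b a' = b a) (hc : b c' = b c) (hac : b a ≠ b c)
    (h : E a - E c ∈ Φ) : E a' - E c' ∈ Φ := by
  have h₁ : E a' - E c ∈ Φ := by
    by_cases haa : a' = a
    · rwa [haa]
    · have := hcl _ (hblock a' a ha haa) _ h
      rwa [reflRoot_E_sub_E_sub haa, Equiv.swap_apply_right,
        Equiv.swap_apply_of_ne_of_ne (fun hca' => hac (by rw [← ha, hca']))
          fun hca => hac (by rw [hca])] at this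
  by_cases hcc : c' = c
  · rwa [hcc]
  · have := hcl _ (hblock c' c hc hcc) _ h₁
    rwa [reflRoot_E_sub_E_sub hcc, Equiv.swap_apply_right,
      Equiv.swap_apply_of_ne_of_ne (fun hac' => hac (by rw [← ha, hac', hc]))
        fun hac' => hac (by rw [← ha, hac'])] at this

lemma reflRoot_mem_Tmap_image_diff (hΦ'Φ : Φ' ⊆ Φ) (hΦ : Φ ⊆ Aset n)
    (hcl : ∀ α ∈ Φ, ∀ β ∈ Φ, reflRoot α β ∈ Φ)
    (hbiff : ∀ i j : Fin n, b i = b j ↔ (i = j ∨ E i - E j ∈ Φ')) :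
    ∀ α ∈ Tmap b '' (Φ \ Φ'), ∀ β ∈ Tmap b '' (Φ \ Φ'),
      reflRoot α β ∈ Tmap b '' (Φ \ Φ') := by
  have hsame i j := (hbiff i j).mp
  have hblock a a' (h : b a = b a') (ha : a ≠ a') : E a - E a' ∈ Φ :=
    hΦ'Φ ((hsame a a' h).resolve_left ha)
  rintro _ ⟨α, hα, rfl⟩ _ ⟨β, hβ, rfl⟩
  obtain ⟨i, j, hbij, rfl⟩ := exists_E_sub_of_mem_diff hΦ hsame hα
  obtain ⟨k, l, hbkl, rfl⟩ := exists_E_sub_of_mem_diff hΦ hsame hβ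
  have hij : i ≠ j := fun h => hbij (congrArg b h)
  obtain ⟨k', hk', hk'swap⟩ := exists_comp_swap_eq_swap_comp b i j k
  obtain ⟨l', hl', hl'swap⟩ := exists_comp_swap_eq_swap_comp b i j l
  have hβ' : E k' - E l' ∈ Φ := E_sub_mem_of_same_blocks hcl hblock hk' hl' hbkl hβ.1
  have hγ := hcl _ hα.1 _ hβ'
  rw [reflRoot_E_sub_E_sub hij] at hγ
  have hne : b (Equiv.swap i j k') ≠ b (Equiv.swap i j l') := by
    rw [hk'swap, hl'swap]
    exact (Equiv.injective _).ne hbkl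
  refine ⟨_, ⟨hγ, fun h => hne ((hbiff _ _).mpr (Or.inr h))⟩, ?_⟩
  simp only [Tmap_E_sub, reflRoot_E_sub_E_sub hbij, hk'swap, hl'swap]

end Blocks

theorem stmt3_general (n m : ℕ) (Φ' : Set (Fin n → ℝ)) (hsub : Φ' ⊆ Aset n)
    (b : Fin n → Fin m) (hb : Function.Surjective b)
    (hbiff : ∀ i j : Fin n, b i = b j ↔ (i = j ∨ E i - E j ∈ Φ')) :
    (Set.range (fun x : Fin m → ℝ => fun i => x (b i)) =
        {v : Fin n → ℝ | ∀ α ∈ Φ', dot α v = 0}) ∧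
    (∀ i j : Fin n, Tmap b (E i - E j) = E (b i) - E (b j)) ∧
    (Tmap b '' (Aset n \ Φ') = Aset m) ∧
    (∀ Φ : Set (Fin n → ℝ), Φ' ⊆ Φ → Φ ⊆ Aset n →
      (∀ α ∈ Φ, ∀ β ∈ Φ, reflRoot α β ∈ Φ) →
      (Tmap b '' (Φ \ Φ') ⊆ Aset m ∧
       ∀ α ∈ Tmap b '' (Φ \ Φ'), ∀ β ∈ Tmap b '' (Φ \ Φ'),
         reflRoot α β ∈ Tmap b '' (Φ \ Φ'))) :=
  ⟨range_comp_eq_ker hsub hb hbiff, Tmap_E_sub b, Tmap_image_Aset_diff hb hbiff,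
    fun _ hΦ'Φ hΦ hcl => ⟨Tmap_image_diff_subset hΦ fun i j => (hbiff i j).mp,
      reflRoot_mem_Tmap_image_diff hΦ'Φ hΦ hcl hbiff⟩⟩

/-- Quotients of `A_{n-1}` modulo a root subsystem are of type `A`. -/
theorem stmt3 (n m : ℕ) (hn : 1 ≤ n) (Φ' : Set (Fin n → ℝ)) (hsub : Φ' ⊆ Aset n)
    (hcl : ∀ α ∈ Φ', ∀ β ∈ Φ', reflRoot α β ∈ Φ')
    (b : Fin n → Fin m) (hb : Function.Surjective b)
    (hbiff : ∀ i j : Fin n, b i = b j ↔ (i = j ∨ E i - E j ∈ Φ')) :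
    (Set.range (fun x : Fin m → ℝ => fun i => x (b i)) =
        {v : Fin n → ℝ | ∀ α ∈ Φ', dot α v = 0}) ∧
    (∀ i j : Fin n, Tmap b (E i - E j) = E (b i) - E (b j)) ∧
    (Tmap b '' (Aset n \ Φ') = Aset m) ∧
    (∀ Φ : Set (Fin n → ℝ), Φ' ⊆ Φ → Φ ⊆ Aset n →
      (∀ α ∈ Φ, ∀ β ∈ Φ, reflRoot α β ∈ Φ) →
      (Tmap b '' (Φ \ Φ') ⊆ Aset m ∧
       ∀ α ∈ Tmap b '' (Φ \ Φ'), ∀ β ∈ Tmap b '' (Φ \ Φ'),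
         reflRoot α β ∈ Tmap b '' (Φ \ Φ'))) :=
  stmt3_general n m Φ' hsub b hb hbiff
end
end

section
/- Let n ≥ 1 and let I_1, I_2 be disjoint nonempty subsets of {1,…,n}. Define Φ^{I_1,I_2} := {±(e_i − e_j) : i ≠ j, both in I_1 or both in I_2} ∪ {±(e_i + e_j) : i ∈ I_1, j ∈ I_2}. Let w : ℝ^n → ℝ^n be the linear map with w(e_i) = −e_i for i ∈ I_1 and w(e_i) = e_i for i ∉ I_1. Then w is an orthogonal involution and the image w(Φ^{I_1,I_2}) equals {e_i − e_j : i, j ∈ I_1 ∪ I_2, i ≠ j}. -/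
open Finset

noncomputable section

/-- The system `Φ^{I₁,I₂}` of the bipartite graph `𝒢^{d₁,d₂}`. -/
def PhiBip {n : ℕ} (I1 I2 : Finset (Fin n)) : Set (Fin n → ℝ) :=
  {α | (∃ i ∈ I1, ∃ j ∈ I1, i ≠ j ∧ α = E i - E j) ∨
       (∃ i ∈ I2, ∃ j ∈ I2, i ≠ j ∧ α = E i - E j) ∨
       (∃ i ∈ I1, ∃ j ∈ I2, α = E i + E j ∨ α = -(E i + E j))}

/-- The sign change `w` on `I₁` is an orthogonal involution taking `Φ^{I₁,I₂}` to the
standard type-`A` system on `I₁ ∪ I₂`. -/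
theorem stmt6 (n : ℕ) (hn : 1 ≤ n) (I1 I2 : Finset (Fin n)) (hd : Disjoint I1 I2)
    (h1 : I1.Nonempty) (h2 : I2.Nonempty)
    (w : (Fin n → ℝ) → (Fin n → ℝ))
    (hw : ∀ v j, w v j = if j ∈ I1 then -v j else v j) :
    IsLinearMap ℝ w ∧
    (∀ v, w (w v) = v) ∧
    (∀ u v, dot (w u) (w v) = dot u v) ∧
    w '' PhiBip I1 I2 = {α | ∃ i ∈ I1 ∪ I2, ∃ j ∈ I1 ∪ I2, i ≠ j ∧ α = E i - E j} := by
  have hdne : ∀ {i j : Fin n}, i ∈ I1 → j ∈ I2 → i ≠ j := fun hi hj h =>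
    Finset.disjoint_left.mp hd hi (h ▸ hj)
  -- w on E i - E j, both in I1
  have h11 : ∀ i ∈ I1, ∀ j ∈ I1, w (E i - E j) = E j - E i := by
    intro i hi j hj
    funext k
    rw [hw]
    by_cases hk : k ∈ I1 <;>
      simp only [hk, if_true, if_false, E, Pi.sub_apply, Pi.single_apply]
    · ring
    · have hki : k ≠ i := fun h => hk (h ▸ hi)
      have hkj : k ≠ j := fun h => hk (h ▸ hj)
      simp [hki, hkj]
  have h22 : ∀ i ∈ I2, ∀ j ∈ I2, w (E i - E j) = E i - E j := by
    intro i hi j hj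
    funext k
    rw [hw]
    by_cases hk : k ∈ I1 <;>
      simp only [hk, if_true, if_false, E, Pi.sub_apply, Pi.single_apply]
    have h1 : k ≠ i := hdne hk hi
    have h2 : k ≠ j := hdne hk hj
    simp [h1, h2]
  have h12 : ∀ i ∈ I1, ∀ j ∈ I2, w (E i + E j) = E j - E i := by
    intro i hi j hj
    funext k
    rw [hw]
    by_cases hk : k ∈ I1 <;>
      simp only [hk, if_true, if_false, E, Pi.add_apply, Pi.sub_apply, Pi.single_apply]
    · have h2 : k ≠ j := hdne hk hj
      simp [h2]; try ring
    · have h1 : k ≠ i := fun h => hk (h ▸ hi)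
      simp [h1]; try ring
  have h12' : ∀ i ∈ I1, ∀ j ∈ I2, w (-(E i + E j)) = E i - E j := by
    intro i hi j hj
    funext k
    rw [hw]
    by_cases hk : k ∈ I1 <;>
      simp only [hk, if_true, if_false, E, Pi.neg_apply, Pi.add_apply, Pi.sub_apply,
        Pi.single_apply]
    · have h2 : k ≠ j := hdne hk hj
      simp [h2]; try ring
    · have h1 : k ≠ i := fun h => hk (h ▸ hi)
      simp [h1]; try ring
  refine ⟨⟨?_, ?_⟩, ?_, ?_, ?_⟩
  · intro u v; funext k; rw [hw]; by_cases hk : k ∈ I1 <;> simp [hw, hk] <;> ring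
  · intro c v; funext k; rw [hw]; by_cases hk : k ∈ I1 <;> simp [hw, hk] <;> ring
  · intro v; funext k; rw [hw]; by_cases hk : k ∈ I1 <;> simp [hw, hk]
  · intro u v
    unfold dot
    refine Finset.sum_congr rfl fun k _ => ?_
    rw [hw, hw]; by_cases hk : k ∈ I1 <;> simp [hk] <;> ring
  · ext α
    constructor
    · rintro ⟨β, hβ, rfl⟩
      rcases hβ with ⟨i, hi, j, hj, hij, rfl⟩ | ⟨i, hi, j, hj, hij, rfl⟩ |
        ⟨i, hi, j, hj, rfl | rfl⟩
      · exact ⟨j, Finset.mem_union_left _ hj, i, Finset.mem_union_left _ hi, hij.symm,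
          h11 i hi j hj⟩
      · exact ⟨i, Finset.mem_union_right _ hi, j, Finset.mem_union_right _ hj, hij,
          h22 i hi j hj⟩
      · exact ⟨j, Finset.mem_union_right _ hj, i, Finset.mem_union_left _ hi,
          (hdne hi hj).symm, h12 i hi j hj⟩
      · exact ⟨i, Finset.mem_union_left _ hi, j, Finset.mem_union_right _ hj,
          hdne hi hj, h12' i hi j hj⟩
    · rintro ⟨i, hi, j, hj, hij, rfl⟩
      rcases Finset.mem_union.mp hi with hi1 | hi2 <;>
        rcases Finset.mem_union.mp hj with hj1 | hj2
      · exact ⟨E j - E i, Or.inl ⟨j, hj1, i, hi1, hij.symm, rfl⟩, h11 j hj1 i hi1⟩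
      · exact ⟨-(E i + E j), Or.inr (Or.inr ⟨i, hi1, j, hj2, Or.inr rfl⟩),
          h12' i hi1 j hj2⟩
      · exact ⟨E j + E i, Or.inr (Or.inr ⟨j, hj1, i, hi2, Or.inl rfl⟩), h12 j hj1 i hi2⟩
      · exact ⟨E i - E j, Or.inr (Or.inl ⟨i, hi2, j, hj2, hij, rfl⟩), h22 i hi2 j hj2⟩
end
end

section
/- Let n ≥ 1, let I_1, I_2 be disjoint nonempty subsets of {1,…,n} with |I_1| = d_1 and |I_2| = d_2, and let Φ^{I_1,I_2} := {±(e_i − e_j) : i ≠ j, both in I_1 or both in I_2} ∪ {±(e_i + e_j) : i ∈ I_1, j ∈ I_2}. Set v := Σ_{i∈I_1} e_i − Σ_{i∈I_2} e_i. Then {u ∈ ℝ^n : u_i = 0 for all i ∉ I_1 ∪ I_2, and ⟨u,α⟩ = 0 for all α ∈ Φ^{I_1,I_2}} = ℝ·v; consequently the linear span of Φ^{I_1,I_2} has dimension d_1 + d_2 − 1. -/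
open Finset

noncomputable section

/-! Fix `i₀ ∈ I₁`. A vector supported on `I₁ ∪ I₂` and orthogonal to the roots `e_i - e_{i₀}`
(`i ∈ I₁`) and `e_{i₀} + e_j` (`j ∈ I₂`) has all its coordinates determined by `u_{i₀}`, so it is
`u_{i₀} v`. For the rank, `span Φ` lies in the kernel of `⟨v, ·⟩`, which does not vanish at
`e_{i₀}`, and `span Φ + ℝ e_{i₀}` is the `(d₁ + d₂)`-dimensional coordinate space of `I₁ ∪ I₂`. -/

open Module Submodule

section LinearAlgebra

variable {K V : Type*} [Field K] [AddCommGroup V] [Module K V] [FiniteDimensional K V]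

theorem finrank_add_one_of_sup_span_singleton_eq {P W : Submodule K V} {f : V →ₗ[K] K}
    (hP : P ≤ LinearMap.ker f) {w : V} (hw : f w ≠ 0) (hW : P ⊔ K ∙ w = W) :
    finrank K P + 1 = finrank K W := by
  have hw0 : w ≠ 0 := by rintro rfl; exact hw (map_zero f)
  have hinf : P ⊓ K ∙ w = ⊥ := by
    refine eq_bot_iff.mpr fun x hx => ?_
    obtain ⟨hxP, c, rfl⟩ := mem_inf.mp hx |>.imp_right mem_span_singleton.mp
    have : c * f w = 0 := by simpa using hP hxP
    simp [(mul_eq_zero.mp this).resolve_right hw]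
  have := finrank_sup_add_finrank_inf_eq P (K ∙ w)
  rwa [hW, hinf, finrank_bot, finrank_span_singleton hw0, add_zero, eq_comm] at this

end LinearAlgebra

variable {n : ℕ}

theorem dot_eq_dotProduct (u w : Fin n → ℝ) : dot u w = u ⬝ᵥ w := rfl

theorem dot_smul_left (c : ℝ) (u w : Fin n → ℝ) : dot (c • u) w = c * dot u w :=
  smul_dotProduct c u w

@[simp]
theorem dot_E (u : Fin n → ℝ) (i : Fin n) : dot u (E i) = u i := by
  simp [dot_eq_dotProduct, E, dotProduct_single]

theorem E_eq_basisFun : (E : Fin n → Fin n → ℝ) = Pi.basisFun ℝ (Fin n) := by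
  funext i; simp [E]

theorem finrank_span_E_image (S : Finset (Fin n)) :
    finrank ℝ (span ℝ (E '' (S : Set (Fin n)))) = S.card := by
  classical
  have hli : LinearIndepOn ℝ id (E '' (S : Set (Fin n))) := by
    refine LinearIndepOn.id_image ?_
    rw [E_eq_basisFun]
    exact (Pi.basisFun ℝ (Fin n)).linearIndependent.linearIndepOn _
  have hinj : Function.Injective (E : Fin n → Fin n → ℝ) := by
    rw [E_eq_basisFun]; exact (Pi.basisFun ℝ (Fin n)).injective
  rw [← S.coe_image, finrank_span_finset_eq_card (by rwa [S.coe_image]),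
    S.card_image_of_injective hinj]

def bipSign (I1 I2 : Finset (Fin n)) : Fin n → ℝ := ∑ i ∈ I1, E i - ∑ i ∈ I2, E i

@[simp]
theorem sum_E_apply (S : Finset (Fin n)) (k : Fin n) :
    ∑ i ∈ S, E i k = if k ∈ S then 1 else 0 := by
  simp [E, Pi.single_apply]

section Bipartite

variable {I1 I2 : Finset (Fin n)}

theorem bipSign_apply_of_mem_left (hd : Disjoint I1 I2) {k : Fin n} (hk : k ∈ I1) :
    bipSign I1 I2 k = 1 := by
  simp [bipSign, hk, Finset.disjoint_left.mp hd hk]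

theorem bipSign_apply_of_mem_right (hd : Disjoint I1 I2) {k : Fin n} (hk : k ∈ I2) :
    bipSign I1 I2 k = -1 := by
  simp [bipSign, hk, Finset.disjoint_right.mp hd hk]

theorem bipSign_apply_of_notMem {k : Fin n} (hk : k ∉ I1 ∪ I2) : bipSign I1 I2 k = 0 := by
  rw [Finset.mem_union, not_or] at hk
  simp [bipSign, hk.1, hk.2]

theorem dot_bipSign_of_mem_PhiBip (hd : Disjoint I1 I2) {α : Fin n → ℝ}
    (hα : α ∈ PhiBip I1 I2) : dot (bipSign I1 I2) α = 0 := by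
  rcases hα with ⟨i, hi, j, hj, -, rfl⟩ | ⟨i, hi, j, hj, -, rfl⟩ | ⟨i, hi, j, hj, rfl | rfl⟩ <;>
    simp [dot_eq_dotProduct, E, dotProduct_single, bipSign_apply_of_mem_left hd,
      bipSign_apply_of_mem_right hd, hi, hj]

theorem eq_smul_bipSign_of_orthogonal (hd : Disjoint I1 I2) {i0 : Fin n} (hi0 : i0 ∈ I1)
    {u : Fin n → ℝ} (hsupp : ∀ i, i ∉ I1 ∪ I2 → u i = 0)
    (horth : ∀ α ∈ PhiBip I1 I2, dot u α = 0) : u = u i0 • bipSign I1 I2 := by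
  funext i
  rw [Pi.smul_apply, smul_eq_mul]
  by_cases hi1 : i ∈ I1
  · rw [bipSign_apply_of_mem_left hd hi1, mul_one]
    rcases eq_or_ne i i0 with rfl | hne
    · rfl
    have := horth (E i - E i0) (Or.inl ⟨i, hi1, i0, hi0, hne, rfl⟩)
    simp [dot_eq_dotProduct, E, dotProduct_single] at this
    linarith
  by_cases hi2 : i ∈ I2
  · rw [bipSign_apply_of_mem_right hd hi2]
    have := horth (E i0 + E i) (Or.inr (Or.inr ⟨i0, hi0, i, hi2, Or.inl rfl⟩))
    simp [dot_eq_dotProduct, E, dotProduct_single] at this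
    linarith
  · have hi : i ∉ I1 ∪ I2 := by simp [hi1, hi2]
    rw [hsupp i hi, bipSign_apply_of_notMem hi, mul_zero]

theorem span_PhiBip_le_ker (hd : Disjoint I1 I2) :
    span ℝ (PhiBip I1 I2) ≤ LinearMap.ker (dotProductBilin ℝ ℝ (bipSign I1 I2)) :=
  span_le.mpr fun _ hα => dot_bipSign_of_mem_PhiBip hd hα

/-- Each `e_k` with `k ∈ I₁ ∪ I₂` is `± e_{i₀}` plus a root (`e_k - e_{i₀}` or `e_{i₀} + e_k`). -/
theorem span_PhiBip_sup_span_E (I1 I2 : Finset (Fin n)) {i0 : Fin n} (hi0 : i0 ∈ I1) :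
    span ℝ (PhiBip I1 I2) ⊔ ℝ ∙ E i0 = span ℝ (E '' ↑(I1 ∪ I2)) := by
  have mem1 : ∀ k ∈ I1, E k ∈ span ℝ (E '' ↑(I1 ∪ I2)) := fun k hk =>
    subset_span ⟨k, by simp [hk], rfl⟩
  have mem2 : ∀ k ∈ I2, E k ∈ span ℝ (E '' ↑(I1 ∪ I2)) := fun k hk =>
    subset_span ⟨k, by simp [hk], rfl⟩
  refine le_antisymm (sup_le (span_le.mpr ?_) ?_) (span_le.mpr ?_)
  · rintro α (⟨i, hi, j, hj, -, rfl⟩ | ⟨i, hi, j, hj, -, rfl⟩ | ⟨i, hi, j, hj, rfl | rfl⟩)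
    · exact sub_mem (mem1 i hi) (mem1 j hj)
    · exact sub_mem (mem2 i hi) (mem2 j hj)
    · exact add_mem (mem1 i hi) (mem2 j hj)
    · exact neg_mem (add_mem (mem1 i hi) (mem2 j hj))
  · exact (span_singleton_le_iff_mem _ _).mpr (mem1 i0 hi0)
  · rintro _ ⟨k, hk, rfl⟩
    have hroot : E k - E i0 ∈ span ℝ (PhiBip I1 I2) ∨ E i0 + E k ∈ span ℝ (PhiBip I1 I2) := by
      rcases Finset.mem_union.mp hk with hk1 | hk2
      · rcases eq_or_ne k i0 with rfl | hne
        · simp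
        exact .inl (subset_span (Or.inl ⟨k, hk1, i0, hi0, hne, rfl⟩))
      · exact .inr (subset_span (Or.inr (Or.inr ⟨i0, hi0, k, hk2, Or.inl rfl⟩)))
    have hi0mem : E i0 ∈ ℝ ∙ E i0 := mem_span_singleton_self _
    rcases hroot with h | h
    · simpa using add_mem (mem_sup_left h) (mem_sup_right hi0mem)
    · simpa using sub_mem (mem_sup_left h) (mem_sup_right hi0mem)

end Bipartite

theorem stmt7_general (n : ℕ) (I1 I2 : Finset (Fin n)) (hd : Disjoint I1 I2)
    (h1 : I1.Nonempty)
    (v : Fin n → ℝ) (hv : v = (∑ i ∈ I1, E i) - (∑ i ∈ I2, E i)) :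
    {u : Fin n → ℝ | (∀ i, i ∉ I1 ∪ I2 → u i = 0) ∧ ∀ α ∈ PhiBip I1 I2, dot u α = 0} =
      {u : Fin n → ℝ | ∃ c : ℝ, u = c • v} ∧
    Module.finrank ℝ (Submodule.span ℝ (PhiBip I1 I2)) = I1.card + I2.card - 1 := by
  obtain ⟨i0, hi0⟩ := h1
  change v = bipSign I1 I2 at hv
  subst hv
  constructor
  · ext u
    refine ⟨fun ⟨hsupp, horth⟩ => ⟨u i0, eq_smul_bipSign_of_orthogonal hd hi0 hsupp horth⟩, ?_⟩
    rintro ⟨c, rfl⟩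
    exact ⟨fun i hi => by simp [bipSign_apply_of_notMem hi], fun α hα => by
      rw [dot_smul_left, dot_bipSign_of_mem_PhiBip hd hα, mul_zero]⟩
  · have key := finrank_add_one_of_sup_span_singleton_eq (span_PhiBip_le_ker hd)
      (by simp [← dot_eq_dotProduct, bipSign_apply_of_mem_left hd hi0])
      (span_PhiBip_sup_span_E I1 I2 hi0)
    rw [finrank_span_E_image, Finset.card_union_of_disjoint hd] at key
    omega

/-- Within the span of the coordinates of `I₁ ∪ I₂`, the orthogonal complement of
`Φ^{I₁,I₂}` is the line through `v = ∑_{I₁} e_i - ∑_{I₂} e_i`; hence `Φ^{I₁,I₂}` has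
rank `d₁ + d₂ - 1`. -/
theorem stmt7 (n : ℕ) (hn : 1 ≤ n) (I1 I2 : Finset (Fin n)) (hd : Disjoint I1 I2)
    (h1 : I1.Nonempty) (h2 : I2.Nonempty)
    (v : Fin n → ℝ) (hv : v = (∑ i ∈ I1, E i) - (∑ i ∈ I2, E i)) :
    {u : Fin n → ℝ | (∀ i, i ∉ I1 ∪ I2 → u i = 0) ∧ ∀ α ∈ PhiBip I1 I2, dot u α = 0} =
      {u : Fin n → ℝ | ∃ c : ℝ, u = c • v} ∧
    Module.finrank ℝ (Submodule.span ℝ (PhiBip I1 I2)) = I1.card + I2.card - 1 :=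
  stmt7_general n I1 I2 hd h1 v hv
end
end

section
/- Let n ≥ 1 and let I_1, I_2 be disjoint nonempty subsets of {1,…,n}. Then Φ^{I_1,I_2} := {±(e_i − e_j) : i ≠ j, both in I_1 or both in I_2} ∪ {±(e_i + e_j) : i ∈ I_1, j ∈ I_2} is a root subsystem of BC_n contained in D_n; that is, Φ^{I_1,I_2} ⊆ D_n and σ_α(β) ∈ Φ^{I_1,I_2} for all α, β ∈ Φ^{I_1,I_2}. Moreover its cardinality is (d_1 + d_2)(d_1 + d_2 − 1), where d_i = |I_i|. -/
open Finset

noncomputable section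

lemma dot_expand {n : ℕ} (a b c d : ℝ) (i j k l : Fin n) :
    dot (a • E i - b • E j) (c • E k - d • E l) =
      a*c*(if i=k then 1 else 0) - a*d*(if i=l then 1 else 0)
      - b*c*(if j=k then 1 else 0) + b*d*(if j=l then 1 else 0) := by
  simp only [dot, E, Pi.sub_apply, Pi.smul_apply, Pi.single_apply, smul_eq_mul,
    sub_mul, mul_sub, Finset.sum_sub_distrib, Finset.sum_add_distrib]
  simp [mul_ite, ite_mul, ite_and, Finset.sum_ite_eq, eq_comm]
  ring

lemma refl_key {n : ℕ} (s : Fin n → ℝ) (hs : ∀ x, s x = 1 ∨ s x = -1)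
    (i j k l : Fin n) (hij : i ≠ j) (hkl : k ≠ l) :
    reflRoot (s i • E i - s j • E j) (s k • E k - s l • E l)
      = s (Equiv.swap i j k) • E (Equiv.swap i j k)
        - s (Equiv.swap i j l) • E (Equiv.swap i j l) := by
  have sq : ∀ x : Fin n, s x * s x = 1 := by
    intro x; rcases hs x with h | h <;> rw [h] <;> ring
  have haa : dot (s i • E i - s j • E j) (s i • E i - s j • E j) = 2 := by
    rw [dot_expand]; simp [hij, hij.symm, sq]; ring
  rw [reflRoot, haa, dot_expand]
  rcases eq_or_ne k i with hki | hki
  · rcases eq_or_ne l j with hlj | hlj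
    · have h1 : k ≠ j := hki ▸ hij
      have h2 : l ≠ i := hlj ▸ hij.symm
      rw [hki, hlj, Equiv.swap_apply_left, Equiv.swap_apply_right]
      simp only [hki, hlj, h1, h2, if_pos rfl, if_neg, sq, ite_true, ite_false,
        eq_self_iff_true, if_true]
      rw [hki, hlj] at *
      simp [hij, hij.symm, sq]
      try module
    · have h1 : k ≠ j := hki ▸ hij
      have h2 : l ≠ i := fun h => hkl (hki.trans h.symm)
      rw [hki, Equiv.swap_apply_left, Equiv.swap_apply_of_ne_of_ne h2 hlj]
      rw [hki] at *
      simp [hij, hij.symm, h2, h2.symm, hlj, hlj.symm, sq]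
      try module
  · rcases eq_or_ne k j with hkj | hkj
    · rcases eq_or_ne l i with hli | hli
      · rw [hkj, hli, Equiv.swap_apply_right, Equiv.swap_apply_left]
        rw [hkj, hli] at *
        simp [hij, hij.symm, sq]
        try module
      · have hlj : l ≠ j := fun h => hkl (hkj.trans h.symm)
        rw [hkj, Equiv.swap_apply_right, Equiv.swap_apply_of_ne_of_ne hli hlj]
        rw [hkj] at *
        simp [hij, hij.symm, hli, hli.symm, hlj, hlj.symm, sq]
        try module
    · rw [Equiv.swap_apply_of_ne_of_ne hki hkj]
      rcases eq_or_ne l i with hli | hli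
      · rw [hli, Equiv.swap_apply_left]
        rw [hli] at *
        simp [hij, hij.symm, hki, hki.symm, hkj,
          hkj.symm, sq]
        try module
      · rcases eq_or_ne l j with hlj | hlj
        · rw [hlj, Equiv.swap_apply_right]
          rw [hlj] at *
          simp [hij, hij.symm, hki, hki.symm, hkj,
            hkj.symm, sq]
          try module
        · rw [Equiv.swap_apply_of_ne_of_ne hli hlj]
          simp [hki, hki.symm, hkj, hkj.symm,
            hli, hli.symm, hlj, hlj.symm]

lemma F_inj {n : ℕ} (s : Fin n → ℝ) (hs : ∀ x, s x = 1 ∨ s x = -1)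
    (i j k l : Fin n) (hij : i ≠ j) (hkl : k ≠ l)
    (h : s i • E i - s j • E j = s k • E k - s l • E l) : i = k ∧ j = l := by
  have hne : ∀ x : Fin n, s x ≠ 0 := by
    intro x; rcases hs x with h | h <;> rw [h] <;> norm_num
  have ev : ∀ x : Fin n, s i * (if x = i then (1:ℝ) else 0) - s j * (if x = j then 1 else 0)
      = s k * (if x = k then 1 else 0) - s l * (if x = l then 1 else 0) := by
    intro x
    have := congrFun h x
    simpa [E, Pi.single_apply] using this
  have hik : i = k := by
    by_contra hik
    have e := ev i
    rw [if_pos rfl, if_neg hij, if_neg hik] at e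
    by_cases hil : i = l
    · rw [if_pos hil] at e
      rw [hil] at e
      rcases hs l with h' | h' <;> rw [h'] at e <;> norm_num at e
    · rw [if_neg hil] at e; simp at e; exact hne i e
  refine ⟨hik, ?_⟩
  by_contra hjl
  have e := ev j
  rw [if_neg (Ne.symm hij), if_pos rfl, if_neg hjl] at e
  by_cases hjk : j = k
  · exact hij (hik.trans hjk.symm)
  · rw [if_neg hjk] at e; simp at e; exact hne j e

lemma phi_char {n : ℕ} (I1 I2 : Finset (Fin n)) (hd : Disjoint I1 I2) :
    PhiBip I1 I2 = (fun p : Fin n × Fin n =>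
      (if p.1 ∈ I1 then (1:ℝ) else -1) • E p.1 - (if p.2 ∈ I1 then (1:ℝ) else -1) • E p.2) ''
      ↑((I1 ∪ I2).offDiag) := by
  have hnot : ∀ x ∈ I2, x ∉ I1 := fun x hx => Finset.disjoint_right.mp hd hx
  ext α
  constructor
  · rintro (⟨i, hi, j, hj, hij, rfl⟩ | ⟨i, hi, j, hj, hij, rfl⟩ | ⟨i, hi, j, hj, h | h⟩)
    · exact ⟨(i, j), by simp [Finset.mem_offDiag, hi, hj, hij], by simp [hi, hj]⟩
    · refine ⟨(j, i), by simp [Finset.mem_offDiag, hi, hj, hij.symm], ?_⟩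
      simp only [if_neg (hnot i hi), if_neg (hnot j hj)]
      module
    · have hij : i ≠ j := fun h' => hnot j hj (h' ▸ hi)
      refine ⟨(i, j), by simp [Finset.mem_offDiag, hi, hj, hij], ?_⟩
      simp only [if_pos hi, if_neg (hnot j hj), h]
      module
    · have hij : j ≠ i := fun h' => hnot j hj (h' ▸ hi)
      refine ⟨(j, i), by simp [Finset.mem_offDiag, hi, hj, hij], ?_⟩
      simp only [if_pos hi, if_neg (hnot j hj), h]
      module
  · rintro ⟨⟨i, j⟩, hmem, rfl⟩
    simp only [Finset.coe_offDiag, Set.mem_offDiag, Finset.mem_coe, Finset.mem_union] at hmem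
    obtain ⟨hi, hj, hij⟩ := hmem
    by_cases h1 : i ∈ I1 <;> by_cases h2 : j ∈ I1
    · exact Or.inl ⟨i, h1, j, h2, hij, by simp [h1, h2]⟩
    · have hj2 : j ∈ I2 := hj.resolve_left h2
      refine Or.inr (Or.inr ⟨i, h1, j, hj2, Or.inl ?_⟩)
      simp only [if_pos h1, if_neg h2]
      module
    · have hi2 : i ∈ I2 := hi.resolve_left h1
      refine Or.inr (Or.inr ⟨j, h2, i, hi2, Or.inr ?_⟩)
      simp only [if_pos h2, if_neg h1]
      module
    · have hi2 : i ∈ I2 := hi.resolve_left h1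
      have hj2 : j ∈ I2 := hj.resolve_left h2
      refine Or.inr (Or.inl ⟨j, hj2, i, hi2, hij.symm, ?_⟩)
      simp only [if_neg h1, if_neg h2]
      module

/-- `Φ^{I₁,I₂}` is a root subsystem of `BC_n` contained in `D_n`, with
`(d₁+d₂)(d₁+d₂-1)` roots. -/
theorem stmt8 (n : ℕ) (hn : 1 ≤ n) (I1 I2 : Finset (Fin n)) (hd : Disjoint I1 I2)
    (h1 : I1.Nonempty) (h2 : I2.Nonempty) :
    PhiBip I1 I2 ⊆ Dset n ∧
    (∀ α ∈ PhiBip I1 I2, ∀ β ∈ PhiBip I1 I2, reflRoot α β ∈ PhiBip I1 I2) ∧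
    (PhiBip I1 I2).ncard = (I1.card + I2.card) * (I1.card + I2.card - 1) := by

  classical
  have hchar := phi_char I1 I2 hd
  set s : Fin n → ℝ := fun k => if k ∈ I1 then 1 else -1 with hs_def
  have hs : ∀ x, s x = 1 ∨ s x = -1 := by
    intro x; by_cases h : x ∈ I1 <;> simp [hs_def, h]
  have hchar' : PhiBip I1 I2 = (fun p : Fin n × Fin n =>
      s p.1 • E p.1 - s p.2 • E p.2) '' ↑((I1 ∪ I2).offDiag) := hchar
  refine ⟨?_, ?_, ?_⟩
  · -- containment in Dset
    intro α hα
    rw [hchar'] at hα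
    obtain ⟨⟨i, j⟩, hmem, rfl⟩ := hα
    simp only [Finset.coe_offDiag, Set.mem_offDiag, Finset.mem_coe, Finset.mem_union] at hmem
    obtain ⟨hi, hj, hij⟩ := hmem
    by_cases h1 : i ∈ I1 <;> by_cases h2 : j ∈ I1
    · exact ⟨i, j, hij, Or.inl (by simp [hs_def, h1, h2])⟩
    · refine ⟨i, j, hij, Or.inr (Or.inl ?_)⟩
      simp only [hs_def, if_pos h1, if_neg h2]
      module
    · refine ⟨j, i, hij.symm, Or.inr (Or.inr ?_)⟩
      simp only [hs_def, if_pos h2, if_neg h1]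
      module
    · refine ⟨j, i, hij.symm, Or.inl ?_⟩
      simp only [hs_def, if_neg h1, if_neg h2]
      module
  · -- closure under reflections
    intro α hα β hβ
    rw [hchar'] at hα hβ ⊢
    obtain ⟨⟨i, j⟩, hmemα, rfl⟩ := hα
    obtain ⟨⟨k, l⟩, hmemβ, rfl⟩ := hβ
    simp only [Finset.coe_offDiag, Set.mem_offDiag, Finset.mem_coe] at hmemα hmemβ
    obtain ⟨hi, hj, hij⟩ := hmemα
    obtain ⟨hk, hl, hkl⟩ := hmemβ
    rw [refl_key s hs i j k l hij hkl]
    have hswap : ∀ x : Fin n, x ∈ I1 ∪ I2 → Equiv.swap i j x ∈ I1 ∪ I2 := by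
      intro x hx
      rcases eq_or_ne x i with h | h
      · rw [h, Equiv.swap_apply_left]; exact hj
      · rcases eq_or_ne x j with h' | h'
        · rw [h', Equiv.swap_apply_right]; exact hi
        · rw [Equiv.swap_apply_of_ne_of_ne h h']; exact hx
    refine ⟨(Equiv.swap i j k, Equiv.swap i j l), ?_, rfl⟩
    simp only [Finset.coe_offDiag, Set.mem_offDiag, Finset.mem_coe]
    exact ⟨hswap k hk, hswap l hl, (Equiv.swap i j).injective.ne hkl⟩
  · -- cardinality
    rw [hchar']
    rw [Set.ncard_image_of_injOn, Set.ncard_coe_finset, Finset.offDiag_card,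
      Finset.card_union_of_disjoint hd]
    · rcases (I1.card + I2.card).eq_zero_or_pos with h | h
      · simp [h]
      · obtain ⟨m, hm⟩ := Nat.exists_eq_succ_of_ne_zero h.ne'
        rw [hm]
        simp [Nat.succ_mul, Nat.mul_succ]
    · intro p hp q hq hpq
      simp only [Finset.coe_offDiag, Set.mem_offDiag, Finset.mem_coe] at hp hq
      obtain ⟨h1, h2⟩ := F_inj s hs p.1 p.2 q.1 q.2 hp.2.2 hq.2.2 hpq
      exact Prod.ext h1 h2
end
end
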